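/- Let M_r = l^{r/2} r!/(r/2)! for even r and l = 2^n. For even integers 2 ≤ r ≤ s with t = (r+s)/2, the quantity S_{r,s} = E[(Δ_f(a))^r (Δ_f(b))^s] (for distinct nonzero a,b) satisfies S_{r,s}/(M_r M_s) ≤ (1 + 2rs/(l(t-1)))^{t-1}. -/

import Mathlib

open Finset

def ac {n : ℕ} (f : (Fin n → ZMod 2) → ZMod 2) (u : Fin n → ZMod 2) : ℤ :=
  ∑ x : Fin n → ZMod 2, (-1 : ℤ) ^ ((f x + f (x + u)).val)

noncomputable def ev (n : ℕ) (X : ((Fin n → ZMod 2) → ZMod 2) → ℝ) : ℝ :=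
  (∑ f : (Fin n → ZMod 2) → ZMod 2, X f) / Fintype.card ((Fin n → ZMod 2) → ZMod 2)

/-- The mixed moment `S_{r,s} = E[Δ_f(a)^r Δ_f(b)^s]`. -/
noncomputable def S (n : ℕ) (a b : Fin n → ZMod 2) (r s : ℕ) : ℝ :=
  ev n fun f => (ac f a : ℝ) ^ r * (ac f b : ℝ) ^ s

/-- `M_r = l^{r/2} r! / (r/2)!` with `l = 2^n`. -/
noncomputable def M (n r : ℕ) : ℝ :=
  (2 ^ n : ℝ) ^ (r / 2) * (Nat.factorial r) / (Nat.factorial (r / 2))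

/-! ### Nat arithmetic preliminaries -/

lemma dfac_odd_succ (h : ℕ) :
    (2*h+1).doubleFactorial = (2*h+1) * (2*h-1).doubleFactorial := by
  cases h with
  | zero => simp [Nat.doubleFactorial]
  | succ h =>
      have e1 : 2*(h+1)+1 = (2*h+1)+2 := by ring
      have e2 : 2*(h+1)-1 = 2*h+1 := by omega
      rw [e1, e2, Nat.doubleFactorial_add_two]

lemma two_pow_le_two_mul_dfac : ∀ α : ℕ, 2^α ≤ 2 * (2*α - 1).doubleFactorial
  | 0 => by simp [Nat.doubleFactorial]
  | 1 => by decide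
  | (α+2) => by
      have ih := two_pow_le_two_mul_dfac (α+1)
      have e2 : 2*(α+2)-1 = 2*(α+1)+1 := by omega
      rw [e2, dfac_odd_succ]
      have h1 : 2^(α+2) ≤ 2 * (2 * (2*(α+1)-1).doubleFactorial) := by
        have e3 : (2:ℕ)^(α+2) = 2 * 2^(α+1) := by ring
        rw [e3]
        exact Nat.mul_le_mul_left 2 ih
      have h2 : 2 * (2*(α+1)-1).doubleFactorial
          ≤ (2*(α+1)+1) * (2*(α+1)-1).doubleFactorial :=
        Nat.mul_le_mul_right _ (by omega)
      omega

lemma dfac_pos (n : ℕ) : 0 < n.doubleFactorial := Nat.doubleFactorial_pos n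

lemma factorial_two_mul' : ∀ h : ℕ, (2*h).factorial = 2^h * h.factorial * (2*h-1).doubleFactorial
  | 0 => by simp [Nat.doubleFactorial]
  | (h+1) => by
      have ih := factorial_two_mul' h
      have e1 : 2*(h+1) = 2*h+1+1 := by ring
      have e2 : 2*h+1+1-1 = 2*h+1 := by omega
      rw [e1, e2, Nat.factorial_succ, Nat.factorial_succ, ih, dfac_odd_succ, Nat.factorial_succ]
      ring

/-- The key double factorial / binomial identity. -/
lemma keyID (h α : ℕ) (hα : α ≤ h) :
    (2*h).choose (2*α) * (2*(h-α)-1).doubleFactorial * (2*α-1).doubleFactorial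
      = (2*h-1).doubleFactorial * h.choose α := by
  have hpos : 0 < 2^h * (α.factorial * (h-α).factorial) := by positivity
  apply Nat.eq_of_mul_eq_mul_right hpos
  have hsplit : (2:ℕ)^h = 2^α * 2^(h-α) := by rw [← pow_add]; congr 1; omega
  have e1 : 2*(h-α) = 2*h - 2*α := by omega
  calc (2*h).choose (2*α) * (2*(h-α)-1).doubleFactorial * (2*α-1).doubleFactorial *
        (2^h * (α.factorial * (h-α).factorial))
      = (2*h).choose (2*α) * ((2^α * α.factorial) * (2*α-1).doubleFactorial) *
          ((2^(h-α) * (h-α).factorial) * (2*(h-α)-1).doubleFactorial) := by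
        rw [hsplit]; try ring
    _ = (2*h).choose (2*α) * (2*α).factorial * (2*(h-α)).factorial := by
        rw [factorial_two_mul' α, factorial_two_mul' (h-α)]; try ring
    _ = (2*h).factorial := by
        rw [e1]
        exact Nat.choose_mul_factorial_mul_factorial (by omega)
    _ = (2*h-1).doubleFactorial * h.choose α * (2^h * (α.factorial * (h-α).factorial)) := by
        rw [factorial_two_mul' h]
        rw [show h.factorial = h.choose α * α.factorial * (h-α).factorial from
          (Nat.choose_mul_factorial_mul_factorial hα).symm]
        ring

lemma keyID_le (h α : ℕ) (hα : α ≤ h) :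
    (2*h).choose (2*α) * (2*(h-α)-1).doubleFactorial ≤ (2*h-1).doubleFactorial * h.choose α := by
  calc (2*h).choose (2*α) * (2*(h-α)-1).doubleFactorial
      ≤ (2*h).choose (2*α) * (2*(h-α)-1).doubleFactorial * (2*α-1).doubleFactorial :=
        Nat.le_mul_of_pos_right _ (dfac_pos _)
    _ = (2*h-1).doubleFactorial * h.choose α := keyID h α hα

/-! ### Stirling numbers of the second kind -/

def St : ℕ → ℕ → ℕ
  | 0, 0 => 1
  | 0, _+1 => 0
  | _+1, 0 => 0
  | a+1, j+1 => St a j + (j+1) * St a (j+1)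

lemma St_gt : ∀ a j : ℕ, a < j → St a j = 0
  | 0, 0 => by omega
  | 0, j+1 => fun _ => rfl
  | a+1, 0 => by omega
  | a+1, j+1 => by
      intro h
      show St a j + (j+1) * St a (j+1) = 0
      rw [St_gt a j (by omega), St_gt a (j+1) (by omega)]
      ring

lemma mul_descFactorial (k j : ℕ) :
    k * k.descFactorial j = k.descFactorial (j+1) + j * k.descFactorial j := by
  rcases le_or_gt j k with h | h
  · rw [Nat.descFactorial_succ, ← Nat.add_mul, Nat.sub_add_cancel h]
  · rw [Nat.descFactorial_eq_zero_iff_lt.mpr h,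
        Nat.descFactorial_eq_zero_iff_lt.mpr (by omega : k < j+1)]
    ring

lemma pow_eq_sum_St (a k : ℕ) : k^a = ∑ j ∈ range (a+1), St a j * k.descFactorial j := by
  induction a with
  | zero => simp [St]
  | succ a ih =>
      have hT : ∑ j ∈ range (a+2), St (a+1) j * k.descFactorial j
          = ∑ j ∈ range (a+1), St (a+1) (j+1) * k.descFactorial (j+1) := by
        rw [Finset.sum_range_succ']
        simp [St]
      have hT2 : ∑ j ∈ range (a+1), (j+1) * St a (j+1) * k.descFactorial (j+1)
          = ∑ j ∈ range (a+1), j * St a j * k.descFactorial j := by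
        have h1 : ∑ j ∈ range (a+2), j * St a j * k.descFactorial j
            = ∑ j ∈ range (a+1), (j+1) * St a (j+1) * k.descFactorial (j+1) := by
          rw [Finset.sum_range_succ']
          simp
        have h2 : ∑ j ∈ range (a+2), j * St a j * k.descFactorial j
            = ∑ j ∈ range (a+1), j * St a j * k.descFactorial j := by
          rw [Finset.sum_range_succ, St_gt a (a+1) (by omega)]
          simp
        omega
      rw [hT]
      have : ∀ j, St (a+1) (j+1) * k.descFactorial (j+1)
          = St a j * k.descFactorial (j+1) + (j+1) * St a (j+1) * k.descFactorial (j+1) := by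
        intro j; show (St a j + (j+1) * St a (j+1)) * _ = _; ring
      rw [Finset.sum_congr rfl (fun j _ => this j), Finset.sum_add_distrib, hT2]
      have : ∑ j ∈ range (a+1), St a j * k.descFactorial (j+1)
            + ∑ j ∈ range (a+1), j * St a j * k.descFactorial j
          = ∑ j ∈ range (a+1), k * (St a j * k.descFactorial j) := by
        rw [← Finset.sum_add_distrib]
        apply Finset.sum_congr rfl
        intro j _
        rw [show k * (St a j * k.descFactorial j) = St a j * (k * k.descFactorial j) by ring,
            mul_descFactorial]
        ring
      rw [this, ← Finset.mul_sum, ← ih]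
      ring

/-! ### Stirling sum recursion, P-bound, integer claim -/

lemma St_sum_rec (g : ℕ → ℕ) (a : ℕ) :
    ∑ j ∈ range (a+2), St (a+1) j * g j
      = ∑ j ∈ range (a+1), St a j * g (j+1) + ∑ j ∈ range (a+1), j * St a j * g j := by
  have hT : ∑ j ∈ range (a+2), St (a+1) j * g j
      = ∑ j ∈ range (a+1), St (a+1) (j+1) * g (j+1) := by
    rw [Finset.sum_range_succ']; simp [St]
  have hT2 : ∑ j ∈ range (a+1), (j+1) * St a (j+1) * g (j+1)
      = ∑ j ∈ range (a+1), j * St a j * g j := by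
    have h1 : ∑ j ∈ range (a+2), j * St a j * g j
        = ∑ j ∈ range (a+1), (j+1) * St a (j+1) * g (j+1) := by
      rw [Finset.sum_range_succ']; simp
    have h2 : ∑ j ∈ range (a+2), j * St a j * g j
        = ∑ j ∈ range (a+1), j * St a j * g j := by
      rw [Finset.sum_range_succ, St_gt a (a+1) (by omega)]; simp
    omega
  rw [hT,
    Finset.sum_congr rfl (fun j _ => show St (a+1) (j+1) * g (j+1)
      = St a j * g (j+1) + (j+1) * St a (j+1) * g (j+1) from by
        show (St a j + (j+1) * St a (j+1)) * _ = _; ring),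
    Finset.sum_add_distrib, hT2]

lemma pow_succ_ge (x : ℕ) : ∀ a : ℕ, 1 ≤ a → x^a + a * x^(a-1) ≤ (x+1)^a
  | 0 => by omega
  | 1 => fun _ => by simp
  | (a+2) => fun _ => by
      have ih := pow_succ_ge x (a+1) (by omega)
      have e1 : a+1-1 = a := by omega
      rw [e1] at ih
      have e2 : a+2-1 = a+1 := by omega
      rw [e2]
      calc x^(a+2) + (a+2) * x^(a+1)
          = x * (x^(a+1) + (a+1) * x^a) + x^(a+1) := by ring
        _ ≤ x * (x+1)^(a+1) + (x+1)^(a+1) := by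
            have h1 : x * (x^(a+1) + (a+1) * x^a) ≤ x * (x+1)^(a+1) :=
              Nat.mul_le_mul_left x ih
            have h2 : x^(a+1) ≤ (x+1)^(a+1) := Nat.pow_le_pow_left (by omega) _
            omega
        _ = (x+1)^(a+2) := by ring

lemma Pbound (m : ℕ) : ∀ a : ℕ, 1 ≤ a →
    ∑ j ∈ range (a+1), St a j * 2^(a-j) * m^j ≤ m * (m+a)^(a-1)
  | 0 => by omega
  | 1 => fun _ => by
      rw [Finset.sum_range_succ, Finset.sum_range_succ, Finset.range_zero, Finset.sum_empty]
      have h0 : St 1 0 = 0 := rfl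
      have h1 : St 1 1 = 1 := rfl
      rw [h0, h1]
      simp
  | (a+2) => fun _ => by
      have ih := Pbound m (a+1) (by omega)
      have key := St_sum_rec (fun j => 2^(a+2-j) * m^j) (a+1)
      have lhs_eq : ∑ j ∈ range (a+3), St (a+2) j * 2^(a+2-j) * m^j
          = ∑ j ∈ range (a+3), St (a+2) j * (2^(a+2-j) * m^j) := by
        apply Finset.sum_congr rfl; intro j _; ring
      have hS1 : ∑ j ∈ range (a+2), St (a+1) j * (2^(a+2-(j+1)) * m^(j+1))
          = m * ∑ j ∈ range (a+2), St (a+1) j * 2^(a+1-j) * m^j := by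
        rw [Finset.mul_sum]
        apply Finset.sum_congr rfl; intro j _
        have : a+2-(j+1) = a+1-j := by omega
        rw [this]; ring
      have hS2 : ∑ j ∈ range (a+2), j * St (a+1) j * (2^(a+2-j) * m^j)
          ≤ 2*(a+1) * ∑ j ∈ range (a+2), St (a+1) j * 2^(a+1-j) * m^j := by
        rw [Finset.mul_sum]
        apply Finset.sum_le_sum; intro j hj
        have hj' : j ≤ a+1 := by simpa using Nat.lt_succ_iff.mp (Finset.mem_range.mp hj)
        have e : 2^(a+2-j) = 2 * 2^(a+1-j) := by
          rw [← pow_succ']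
          congr 1
          omega
        rw [e]
        calc j * St (a+1) j * (2 * 2^(a+1-j) * m^j)
            ≤ (a+1) * St (a+1) j * (2 * 2^(a+1-j) * m^j) := by
              apply Nat.mul_le_mul_right
              exact Nat.mul_le_mul_right _ hj'
          _ = 2*(a+1) * (St (a+1) j * 2^(a+1-j) * m^j) := by ring
      have step : ∑ j ∈ range (a+3), St (a+2) j * 2^(a+2-j) * m^j
          ≤ (m + 2*(a+1)) * ∑ j ∈ range (a+2), St (a+1) j * 2^(a+1-j) * m^j := by
        rw [lhs_eq]
        calc ∑ j ∈ range (a+3), St (a+2) j * (2^(a+2-j) * m^j)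
            = ∑ j ∈ range (a+2), St (a+1) j * (2^(a+2-(j+1)) * m^(j+1))
              + ∑ j ∈ range (a+2), j * St (a+1) j * (2^(a+2-j) * m^j) := key
          _ ≤ m * (∑ j ∈ range (a+2), St (a+1) j * 2^(a+1-j) * m^j)
              + 2*(a+1) * ∑ j ∈ range (a+2), St (a+1) j * 2^(a+1-j) * m^j := by
                rw [← hS1]
                exact Nat.add_le_add_left hS2 _
          _ = (m + 2*(a+1)) * ∑ j ∈ range (a+2), St (a+1) j * 2^(a+1-j) * m^j := by ring
      have final : (m + 2*(a+1)) * (m * (m+(a+1))^(a+1-1)) ≤ m * (m+(a+2))^(a+2-1) := by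
        have e1 : a+1-1 = a := by omega
        have e2 : a+2-1 = a+1 := by omega
        rw [e1, e2]
        have h3 : (m+2*(a+1)) * (m+(a+1))^a ≤ (m+(a+1)+1)^(a+1) := by
          have hp := pow_succ_ge (m+(a+1)) (a+1) (by omega)
          have e3 : a+1-1 = a := by omega
          rw [e3] at hp
          calc (m+2*(a+1)) * (m+(a+1))^a
              = (m+(a+1))^(a+1) + (a+1) * (m+(a+1))^a := by ring
            _ ≤ (m+(a+1)+1)^(a+1) := hp
        calc (m + 2*(a+1)) * (m * (m+(a+1))^a)
            = m * ((m+2*(a+1)) * (m+(a+1))^a) := by ring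
          _ ≤ m * (m+(a+1)+1)^(a+1) := Nat.mul_le_mul_left m h3
          _ = m * (m+(a+2))^(a+1) := by ring_nf
      calc ∑ j ∈ range (a+2+1), St (a+2) j * 2^(a+2-j) * m^j
          ≤ (m + 2*(a+1)) * ∑ j ∈ range (a+2), St (a+1) j * 2^(a+1-j) * m^j := step
        _ ≤ (m + 2*(a+1)) * (m * (m+(a+1))^(a+1-1)) := Nat.mul_le_mul_left _ ih
        _ ≤ m * (m+(a+2))^(a+2-1) := final

lemma intClaim (m a c : ℕ) (ha : 1 ≤ a) :
    ∑ j ∈ range (a+1), St a j * 2^(a-j) * (m.descFactorial j * (m+j)^c)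
      ≤ m * (m+a)^(c+(a-1)) := by
  have step1 : ∑ j ∈ range (a+1), St a j * 2^(a-j) * (m.descFactorial j * (m+j)^c)
      ≤ ∑ j ∈ range (a+1), St a j * 2^(a-j) * (m^j * (m+a)^c) := by
    apply Finset.sum_le_sum; intro j hj
    have hj' : j ≤ a := by have := Finset.mem_range.mp hj; omega
    apply Nat.mul_le_mul_left
    exact Nat.mul_le_mul (Nat.descFactorial_le_pow m j)
      (Nat.pow_le_pow_left (by omega) c)
  have step2 : ∑ j ∈ range (a+1), St a j * 2^(a-j) * (m^j * (m+a)^c)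
      = (∑ j ∈ range (a+1), St a j * 2^(a-j) * m^j) * (m+a)^c := by
    rw [Finset.sum_mul]; apply Finset.sum_congr rfl; intro j _; ring
  have step3 : (∑ j ∈ range (a+1), St a j * 2^(a-j) * m^j) * (m+a)^c
      ≤ (m * (m+a)^(a-1)) * (m+a)^c := Nat.mul_le_mul_right _ (Pbound m a ha)
  have step4 : (m * (m+a)^(a-1)) * (m+a)^c = m * (m+a)^(c+(a-1)) := by
    rw [mul_assoc, ← pow_add]; ring_nf
  omega

/-! ### The Rademacher model sums -/

def sg (b : Bool) : ℤ := if b then 1 else -1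

/-- `Gp p k x = ∑_{ε ∈ {±1}^k} (x + 4∑ε)^p`. -/
def Gp (p k : ℕ) (x : ℤ) : ℤ := ∑ ε : Fin k → Bool, (x + 4 * ∑ i, sg (ε i))^p

def AA (p k : ℕ) : ℤ := Gp p k 0

lemma Gp_zero (p : ℕ) (x : ℤ) : Gp p 0 x = x^p := by
  rw [Gp]
  have h : ∀ ε : Fin 0 → Bool, (x + 4 * ∑ i, sg (ε i))^p = x^p := by
    intro ε; simp
  rw [Finset.sum_congr rfl (fun ε _ => h ε), Finset.sum_const, Finset.card_univ]
  have : Fintype.card (Fin 0 → Bool) = 1 := by simp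
  rw [this, one_smul]

lemma Gp_succ (p k : ℕ) (x : ℤ) : Gp p (k+1) x = Gp p k (x+4) + Gp p k (x-4) := by
  have key : ∑ bc : Bool × (Fin k → Bool), (x + 4 * (sg bc.1 + ∑ i, sg (bc.2 i)))^p
      = Gp p (k+1) x := by
    rw [Gp]
    apply Fintype.sum_equiv (Fin.consEquiv (fun _ => Bool))
    intro bc
    simp [Fin.sum_univ_succ]
  rw [← key, Fintype.sum_prod_type, Fintype.sum_bool, Gp, Gp]
  congr 1 <;>
    (apply Finset.sum_congr rfl; intro ε _; simp only [sg, if_true, Bool.false_eq_true,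
      if_false]; try ring)

lemma AA_zero_k (p : ℕ) : AA p 0 = 0^p := by rw [AA, Gp_zero]

lemma AA_succ (q n : ℕ) :
    AA q (n+1) = ∑ i ∈ range (q+1), (q.choose i : ℤ) * (4^i + (-4)^i) * AA (q-i) n := by
  rw [AA, Gp_succ]
  have expand : ∀ y : ℤ, Gp q n y = ∑ i ∈ range (q+1), (q.choose i : ℤ) * y^i * AA (q-i) n := by
    intro y
    rw [Gp]
    have : ∀ ε : Fin n → Bool, (y + 4 * ∑ i, sg (ε i))^q
        = ∑ i ∈ range (q+1), (q.choose i : ℤ) * y^i * (0 + 4 * ∑ i, sg (ε i))^(q-i) := by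
      intro ε
      rw [add_pow]
      apply Finset.sum_congr rfl
      intro i _
      ring
    rw [Finset.sum_congr rfl (fun ε _ => this ε), Finset.sum_comm]
    apply Finset.sum_congr rfl
    intro i _
    rw [AA, Gp, Finset.mul_sum]
  rw [show (0:ℤ)+4 = 4 by ring, show (0:ℤ)-4 = -4 by ring, expand 4, expand (-4),
    ← Finset.sum_add_distrib]
  apply Finset.sum_congr rfl
  intro i _
  ring

lemma sum_even_vanish {M : Type*} [AddCommMonoid M] (c : ℕ) (f : ℕ → M)
    (hodd : ∀ i, f (2*i+1) = 0) :
    ∑ i ∈ range (2*c+1), f i = ∑ α ∈ range (c+1), f (2*α) := by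
  induction c with
  | zero => simp
  | succ c ih =>
      have e1 : 2*(c+1)+1 = (2*c+1)+1+1 := by ring
      rw [e1, Finset.sum_range_succ, Finset.sum_range_succ, ih, Finset.sum_range_succ]
      rw [hodd c]
      have e2 : 2*c+1+1 = 2*(c+1) := by ring
      rw [e2, add_zero, Finset.sum_range_succ, Finset.sum_range_succ]

lemma AA_even_succ (c n : ℕ) :
    AA (2*c) (n+1)
      = ∑ α ∈ range (c+1), ((2*c).choose (2*α) : ℤ) * 2 * 16^α * AA (2*(c-α)) n := by
  rw [AA_succ]
  have : ∑ i ∈ range (2*c+1), ((2*c).choose i : ℤ) * (4^i + (-4)^i) * AA (2*c-i) n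
      = ∑ α ∈ range (c+1), ((2*c).choose (2*α) : ℤ) * (4^(2*α) + (-4)^(2*α)) * AA (2*c-2*α) n := by
    apply sum_even_vanish c
      (fun i => ((2*c).choose i : ℤ) * (4^i + (-4)^i) * AA (2*c-i) n)
    intro i
    have : ((-4:ℤ))^(2*i+1) = -(4^(2*i+1)) := Odd.neg_pow ⟨i, by ring⟩ 4
    rw [this]
    ring
  rw [this]
  apply Finset.sum_congr rfl
  intro α hα
  have hαc : α ≤ c := by have := Finset.mem_range.mp hα; omega
  have e1 : 2*c - 2*α = 2*(c-α) := by omega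
  have e2 : ((-4:ℤ))^(2*α) = 4^(2*α) := Even.neg_pow ⟨α, by ring⟩ 4
  have e3 : (4:ℤ)^(2*α) = 16^α := by rw [show (16:ℤ) = 4^2 by norm_num, ← pow_mul]
  rw [e1, e2, e3]
  try ring

lemma AA_nonneg (c k : ℕ) : 0 ≤ AA (2*c) k := by
  rw [AA, Gp]
  apply Finset.sum_nonneg
  intro ε _
  exact Even.pow_nonneg ⟨c, by ring⟩ _

lemma binom1 (k c : ℕ) : ((k:ℤ)+1)^c = ∑ α ∈ range (c+1), (c.choose α : ℤ) * (k:ℤ)^(c-α) := by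
  rw [add_pow]
  rw [← Finset.sum_range_reflect]
  apply Finset.sum_congr rfl
  intro α hα
  have hαc : α ≤ c := by have := Finset.mem_range.mp hα; omega
  have e1 : c+1-1-α = c-α := by omega
  rw [e1, Nat.choose_symm hαc]
  try ring

lemma binomX (X Y : ℤ) (c : ℕ) :
    (X+Y)^c = ∑ α ∈ range (c+1), (c.choose α : ℤ) * Y^α * X^(c-α) := by
  rw [add_pow]
  rw [← Finset.sum_range_reflect]
  apply Finset.sum_congr rfl
  intro α hα
  have hαc : α ≤ c := by have := Finset.mem_range.mp hα; omega
  have e1 : c+1-1-α = c-α := by omega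
  have e2 : c-(c-α) = α := by omega
  rw [e1, Nat.choose_symm hαc, e2]
  try ring

/-- Gaussian domination per `k`. -/
lemma AA_le : ∀ k c : ℕ, AA (2*c) k ≤ ((2*c-1).doubleFactorial : ℤ) * 16^c * (k:ℤ)^c * 2^k := by
  intro k
  induction k with
  | zero =>
      intro c
      rw [AA_zero_k]
      cases c with
      | zero => simp
      | succ c =>
          rw [show 2*(c+1) = (2*c+1)+1 by ring, pow_succ]
          simp
  | succ k ih =>
      intro c
      rw [AA_even_succ]
      have bound : ∀ α ∈ range (c+1),
          ((2*c).choose (2*α) : ℤ) * 2 * 16^α * AA (2*(c-α)) k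
            ≤ ((2*c-1).doubleFactorial : ℤ) * (c.choose α) * 2 * 16^c * (k:ℤ)^(c-α) * 2^k := by
        intro α hα
        have hαc : α ≤ c := by have := Finset.mem_range.mp hα; omega
        have h1 : AA (2*(c-α)) k
            ≤ ((2*(c-α)-1).doubleFactorial : ℤ) * 16^(c-α) * (k:ℤ)^(c-α) * 2^k := ih (c-α)
        have h2 : ((2*c).choose (2*α) : ℤ) * 2 * 16^α * AA (2*(c-α)) k
            ≤ ((2*c).choose (2*α) : ℤ) * 2 * 16^α *
              (((2*(c-α)-1).doubleFactorial : ℤ) * 16^(c-α) * (k:ℤ)^(c-α) * 2^k) := by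
          apply mul_le_mul_of_nonneg_left h1
          positivity
        apply h2.trans
        have e16 : (16:ℤ)^α * 16^(c-α) = 16^c := by rw [← pow_add]; congr 1; omega
        have h3 : ((2*c).choose (2*α) : ℤ) * ((2*(c-α)-1).doubleFactorial : ℤ)
            ≤ ((2*c-1).doubleFactorial : ℤ) * (c.choose α) := by
          exact_mod_cast Nat.cast_le.mpr (keyID_le c α hαc)
        calc ((2*c).choose (2*α) : ℤ) * 2 * 16^α *
              (((2*(c-α)-1).doubleFactorial : ℤ) * 16^(c-α) * (k:ℤ)^(c-α) * 2^k)
            = (((2*c).choose (2*α) : ℤ) * ((2*(c-α)-1).doubleFactorial : ℤ)) *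
              (2 * (16^α * 16^(c-α)) * (k:ℤ)^(c-α) * 2^k) := by ring
          _ ≤ (((2*c-1).doubleFactorial : ℤ) * (c.choose α)) *
              (2 * (16^α * 16^(c-α)) * (k:ℤ)^(c-α) * 2^k) := by
              apply mul_le_mul_of_nonneg_right h3
              positivity
          _ = ((2*c-1).doubleFactorial : ℤ) * (c.choose α) * 2 * 16^c * (k:ℤ)^(c-α) * 2^k := by
              rw [e16]; ring
      calc ∑ α ∈ range (c+1), ((2*c).choose (2*α) : ℤ) * 2 * 16^α * AA (2*(c-α)) k
          ≤ ∑ α ∈ range (c+1),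
              ((2*c-1).doubleFactorial : ℤ) * (c.choose α) * 2 * 16^c * (k:ℤ)^(c-α) * 2^k :=
            Finset.sum_le_sum bound
        _ = ((2*c-1).doubleFactorial : ℤ) * 16^c * 2^k * 2 *
              ∑ α ∈ range (c+1), (c.choose α : ℤ) * (k:ℤ)^(c-α) := by
            rw [Finset.mul_sum]
            apply Finset.sum_congr rfl
            intro α _
            ring
        _ = ((2*c-1).doubleFactorial : ℤ) * 16^c * ((k:ℤ)+1)^c * 2^(k+1) := by
            rw [binom1]
            ring
        _ = ((2*c-1).doubleFactorial : ℤ) * 16^c * ((k+1:ℕ):ℤ)^c * 2^(k+1) := by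
            push_cast
            ring

/-! ### Weighted binomial sums of `AA` and their bounds -/

def NZ (m j q : ℕ) : ℤ := ∑ k ∈ range (m+1), (m.choose k : ℤ) * 8^(m-k) * 4^k * AA q (k+j)

lemma pascal_split (m : ℕ) (d : ℤ) (A : ℕ → ℤ) :
    ∑ k ∈ range (m+2), ((m+1).choose k : ℤ) * 8^(m+1-k) * d^k * A k
      = 8 * (∑ k ∈ range (m+1), (m.choose k : ℤ) * 8^(m-k) * d^k * A k)
        + d * ∑ k ∈ range (m+1), (m.choose k : ℤ) * 8^(m-k) * d^k * A (k+1) := by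
  rw [Finset.sum_range_succ' (fun k => ((m+1).choose k : ℤ) * 8^(m+1-k) * d^k * A k) (m+1)]
  have hsplit : ∀ k ∈ range (m+1),
      ((m+1).choose (k+1) : ℤ) * 8^(m+1-(k+1)) * d^(k+1) * A (k+1)
        = (m.choose k : ℤ) * 8^(m-k) * d^(k+1) * A (k+1)
          + (m.choose (k+1) : ℤ) * 8^(m-k) * d^(k+1) * A (k+1) := by
    intro k _
    have e : m+1-(k+1) = m-k := by omega
    rw [e, Nat.choose_succ_succ]
    push_cast
    ring
  rw [Finset.sum_congr rfl hsplit, Finset.sum_add_distrib]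
  have hS1 : ∑ k ∈ range (m+1), (m.choose k : ℤ) * 8^(m-k) * d^(k+1) * A (k+1)
      = d * ∑ k ∈ range (m+1), (m.choose k : ℤ) * 8^(m-k) * d^k * A (k+1) := by
    rw [Finset.mul_sum]
    apply Finset.sum_congr rfl
    intro k _
    ring
  have hS2 : ∑ k ∈ range (m+1), (m.choose (k+1) : ℤ) * 8^(m-k) * d^(k+1) * A (k+1)
      = 8 * (∑ k ∈ range (m+1), (m.choose k : ℤ) * 8^(m-k) * d^k * A k)
        - 8^(m+1) * A 0 := by
    have g1 : ∑ k ∈ range (m+2), (m.choose k : ℤ) * 8^(m+1-k) * d^k * A k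
        = (∑ k ∈ range (m+1), (m.choose (k+1) : ℤ) * 8^(m-k) * d^(k+1) * A (k+1))
          + (m.choose 0 : ℤ) * 8^(m+1-0) * d^0 * A 0 := by
      rw [Finset.sum_range_succ' (fun k => (m.choose k : ℤ) * 8^(m+1-k) * d^k * A k) (m+1)]
      congr 1
      apply Finset.sum_congr rfl
      intro k hk
      have e : m+1-(k+1) = m-k := by omega
      rw [e]
    have g2 : ∑ k ∈ range (m+2), (m.choose k : ℤ) * 8^(m+1-k) * d^k * A k
        = ∑ k ∈ range (m+1), (m.choose k : ℤ) * 8^(m+1-k) * d^k * A k := by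
      rw [Finset.sum_range_succ, Nat.choose_succ_self]
      push_cast
      ring
    have g3 : ∑ k ∈ range (m+1), (m.choose k : ℤ) * 8^(m+1-k) * d^k * A k
        = 8 * ∑ k ∈ range (m+1), (m.choose k : ℤ) * 8^(m-k) * d^k * A k := by
      rw [Finset.mul_sum]
      apply Finset.sum_congr rfl
      intro k hk
      have hk' : k ≤ m := by have := Finset.mem_range.mp hk; omega
      have e : m+1-k = (m-k)+1 := by omega
      rw [e, pow_succ]
      ring
    have g4 : (m.choose 0 : ℤ) * 8^(m+1-0) * d^0 * A 0 = 8^(m+1) * A 0 := by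
      norm_num
    rw [g2, g3, g4] at g1
    linarith
  have hF0 : ((m+1).choose 0 : ℤ) * 8^(m+1-0) * d^0 * A 0 = 8^(m+1) * A 0 := by
    norm_num
  rw [hS1, hS2, hF0]
  ring

lemma NZ_pascal (m j q : ℕ) : NZ (m+1) j q = 8 * NZ m j q + 4 * NZ m (j+1) q := by
  rw [NZ, NZ, NZ]
  have := pascal_split m 4 (fun k => AA q (k+j))
  rw [this]
  congr 1
  rw [Finset.mul_sum, Finset.mul_sum]
  apply Finset.sum_congr rfl
  intro k _
  have e : k+1+j = k+(j+1) := by omega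
  rw [e]

lemma NZ_succ_j (m j c : ℕ) :
    NZ m (j+1) (2*c)
      = ∑ α ∈ range (c+1), ((2*c).choose (2*α) : ℤ) * 2 * 16^α * NZ m j (2*(c-α)) := by
  rw [NZ]
  have h1 : ∀ k ∈ range (m+1),
      (m.choose k : ℤ) * 8^(m-k) * 4^k * AA (2*c) (k+(j+1))
        = ∑ α ∈ range (c+1), ((2*c).choose (2*α) : ℤ) * 2 * 16^α *
            ((m.choose k : ℤ) * 8^(m-k) * 4^k * AA (2*(c-α)) (k+j)) := by
    intro k _
    have e : k+(j+1) = (k+j)+1 := by omega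
    rw [e, AA_even_succ, Finset.mul_sum]
    apply Finset.sum_congr rfl
    intro α _
    ring
  rw [Finset.sum_congr rfl h1, Finset.sum_comm]
  apply Finset.sum_congr rfl
  intro α _
  rw [NZ, Finset.mul_sum]

lemma coeff_le (c α : ℕ) (h : α ≤ c) :
    (2*c).choose (2*α) * (2*(c-α)-1).doubleFactorial * 2^α
      ≤ 2 * ((2*c-1).doubleFactorial * c.choose α) := by
  apply Nat.le_of_mul_le_mul_right _ (dfac_pos (2*α-1))
  calc (2*c).choose (2*α) * (2*(c-α)-1).doubleFactorial * 2^α * (2*α-1).doubleFactorial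
      = ((2*c).choose (2*α) * (2*(c-α)-1).doubleFactorial * (2*α-1).doubleFactorial) * 2^α := by
        ring
    _ = ((2*c-1).doubleFactorial * c.choose α) * 2^α := by rw [keyID c α h]
    _ ≤ ((2*c-1).doubleFactorial * c.choose α) * (2 * (2*α-1).doubleFactorial) :=
        Nat.mul_le_mul_left _ (two_pow_le_two_mul_dfac α)
    _ = 2 * ((2*c-1).doubleFactorial * c.choose α) * (2*α-1).doubleFactorial := by ring

lemma NZ0_le : ∀ m c : ℕ,
    NZ m 0 (2*c) ≤ ((2*c-1).doubleFactorial : ℤ) * (8*(m:ℤ))^c * 16^m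
  | 0 => by
      intro c
      rw [NZ]
      rw [Finset.sum_range_succ, Finset.range_zero, Finset.sum_empty]
      simp only [Nat.choose_self, Nat.cast_one, zero_add]
      rw [AA_zero_k]
      cases c with
      | zero => norm_num
      | succ c =>
          rw [show 2*(c+1) = (2*c+1)+1 by ring, pow_succ]
          norm_num
  | (m+1) => by
      intro c
      have ihm := NZ0_le m
      have rec1 : NZ (m+1) 0 (2*c)
          = 8 * NZ m 0 (2*c)
            + 8 * ∑ α ∈ range (c+1),
                ((2*c).choose (2*α) : ℤ) * 16^α * NZ m 0 (2*(c-α)) := by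
        rw [NZ_pascal, NZ_succ_j]
        rw [Finset.mul_sum, Finset.mul_sum]
        congr 1
        apply Finset.sum_congr rfl
        intro α _
        ring
      rw [rec1]
      -- hat bound on each α-term
      have hatY : ∀ α, α ≤ c →
          ((2*c).choose (2*α) : ℤ) * 16^α * NZ m 0 (2*(c-α))
            ≤ ((2*c).choose (2*α) : ℤ) * 16^α *
                (((2*(c-α)-1).doubleFactorial : ℤ) * (8*(m:ℤ))^(c-α) * 16^m) := by
        intro α hαc
        apply mul_le_mul_of_nonneg_left (ihm (c-α))
        positivity
      have term2 : ∀ α, α ≤ c →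
          ((2*c).choose (2*α) : ℤ) * 16^α *
              (((2*(c-α)-1).doubleFactorial : ℤ) * (8*(m:ℤ))^(c-α) * 16^m)
            ≤ 2 * ((2*c-1).doubleFactorial : ℤ) * (c.choose α) * 8^α * (8*(m:ℤ))^(c-α) * 16^m := by
        intro α hαc
        have key : ((2*c).choose (2*α) * (2*(c-α)-1).doubleFactorial * 2^α : ℤ)
            ≤ 2 * ((2*c-1).doubleFactorial * c.choose α) := by
          exact_mod_cast Nat.cast_le.mpr (coeff_le c α hαc)
        have e16 : (16:ℤ)^α = 2^α * 8^α := by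
          rw [← mul_pow]; norm_num
        calc ((2*c).choose (2*α) : ℤ) * 16^α *
              (((2*(c-α)-1).doubleFactorial : ℤ) * (8*(m:ℤ))^(c-α) * 16^m)
            = (((2*c).choose (2*α) : ℤ) * ((2*(c-α)-1).doubleFactorial : ℤ) * 2^α) *
                (8^α * (8*(m:ℤ))^(c-α) * 16^m) := by rw [e16]; ring
          _ ≤ (2 * (((2*c-1).doubleFactorial : ℤ) * (c.choose α))) *
                (8^α * (8*(m:ℤ))^(c-α) * 16^m) := by
              apply mul_le_mul_of_nonneg_right key
              positivity
          _ = 2 * ((2*c-1).doubleFactorial : ℤ) * (c.choose α) * 8^α * (8*(m:ℤ))^(c-α) * 16^m := by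
              ring
      have hsum : ∑ α ∈ range (c+1), ((2*c).choose (2*α) : ℤ) * 16^α * NZ m 0 (2*(c-α))
          = (∑ α ∈ range c, ((2*c).choose (2*(α+1)) : ℤ) * 16^(α+1) * NZ m 0 (2*(c-(α+1))))
            + NZ m 0 (2*c) := by
        rw [Finset.sum_range_succ'
          (fun α => ((2*c).choose (2*α) : ℤ) * 16^α * NZ m 0 (2*(c-α))) c]
        norm_num
      rw [hsum]
      have step1 : ∑ α ∈ range c, ((2*c).choose (2*(α+1)) : ℤ) * 16^(α+1) * NZ m 0 (2*(c-(α+1)))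
          ≤ ∑ α ∈ range c,
              2 * ((2*c-1).doubleFactorial : ℤ) * (c.choose (α+1)) * 8^(α+1) *
                (8*(m:ℤ))^(c-(α+1)) * 16^m := by
        apply Finset.sum_le_sum
        intro α hα
        have hαc : α+1 ≤ c := by have := Finset.mem_range.mp hα; omega
        exact (hatY (α+1) hαc).trans (term2 (α+1) hαc)
      have hX := ihm c
      have final_eq : ((2*c-1).doubleFactorial : ℤ) * (8*((m+1:ℕ):ℤ))^c * 16^(m+1)
          = 16 * (((2*c-1).doubleFactorial : ℤ) * (8*(m:ℤ))^c * 16^m)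
            + ∑ α ∈ range c,
                16 * (((2*c-1).doubleFactorial : ℤ) * (c.choose (α+1)) * 8^(α+1) *
                  (8*(m:ℤ))^(c-(α+1)) * 16^m) := by
        have hb : (8*((m:ℤ)+1))^c
            = ∑ α ∈ range (c+1), (c.choose α : ℤ) * 8^α * (8*(m:ℤ))^(c-α) := by
          rw [show (8*((m:ℤ)+1)) = 8*(m:ℤ) + 8 by ring, binomX]
        push_cast
        rw [hb, Finset.sum_range_succ'
          (fun α => (c.choose α : ℤ) * 8^α * (8*(m:ℤ))^(c-α)) c]
        simp only [Nat.choose_zero_right, Nat.cast_one, pow_zero, Nat.sub_zero]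
        rw [mul_add, add_mul, Finset.mul_sum, Finset.sum_mul]
        have pereq : ∀ α ∈ range c,
            ((2*c-1).doubleFactorial : ℤ) * ((c.choose (α+1) : ℤ) * 8^(α+1) *
                (8*(m:ℤ))^(c-(α+1))) * 16^(m+1)
              = 16 * (((2*c-1).doubleFactorial : ℤ) * (c.choose (α+1)) * 8^(α+1) *
                  (8*(m:ℤ))^(c-(α+1)) * 16^m) := by
          intro α _
          ring
        rw [Finset.sum_congr rfl pereq]
        ring
      rw [final_eq]
      have sum8 : (∑ α ∈ range c,
              16 * (((2*c-1).doubleFactorial : ℤ) * (c.choose (α+1)) * 8^(α+1) *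
                (8*(m:ℤ))^(c-(α+1)) * 16^m))
          = 8 * ∑ α ∈ range c,
              2 * ((2*c-1).doubleFactorial : ℤ) * (c.choose (α+1)) * 8^(α+1) *
                (8*(m:ℤ))^(c-(α+1)) * 16^m := by
        rw [Finset.mul_sum]
        apply Finset.sum_congr rfl
        intro α _
        ring
      have hNZ2 : 8 * NZ m 0 (2*c) + 8 * NZ m 0 (2*c) ≤ 16 * (((2*c-1).doubleFactorial : ℤ) * (8*(m:ℤ))^c * 16^m) := by
        linarith
      linarith [step1, sum8]

/-- The main bound on shifted weighted sums. -/
lemma NZ_le : ∀ j m c : ℕ,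
    NZ m j (2*c) ≤ ((2*c-1).doubleFactorial : ℤ) * (8*(m:ℤ)+16*(j:ℤ))^c * 16^m * 2^j := by
  intro j
  induction j with
  | zero =>
      intro m c
      have := NZ0_le m c
      simpa using this
  | succ j ihj =>
      intro m c
      have tb : ∀ α ∈ range (c+1),
          ((2*c).choose (2*α) : ℤ) * 2 * 16^α * NZ m j (2*(c-α))
            ≤ 2 * ((2*c-1).doubleFactorial : ℤ) * (c.choose α) * 16^α *
                (8*(m:ℤ)+16*(j:ℤ))^(c-α) * 16^m * 2^j := by
        intro α hα
        have hαc : α ≤ c := by have := Finset.mem_range.mp hα; omega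
        have h1 := ihj m (c-α)
        have h2 : ((2*c).choose (2*α) : ℤ) * 2 * 16^α * NZ m j (2*(c-α))
            ≤ ((2*c).choose (2*α) : ℤ) * 2 * 16^α *
              (((2*(c-α)-1).doubleFactorial : ℤ) * (8*(m:ℤ)+16*(j:ℤ))^(c-α) * 16^m * 2^j) := by
          apply mul_le_mul_of_nonneg_left h1
          positivity
        apply h2.trans
        have h3 : ((2*c).choose (2*α) : ℤ) * ((2*(c-α)-1).doubleFactorial : ℤ)
            ≤ ((2*c-1).doubleFactorial : ℤ) * (c.choose α) := by
          exact_mod_cast Nat.cast_le.mpr (keyID_le c α hαc)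
        calc ((2*c).choose (2*α) : ℤ) * 2 * 16^α *
              (((2*(c-α)-1).doubleFactorial : ℤ) * (8*(m:ℤ)+16*(j:ℤ))^(c-α) * 16^m * 2^j)
            = (((2*c).choose (2*α) : ℤ) * ((2*(c-α)-1).doubleFactorial : ℤ)) *
                (2 * 16^α * (8*(m:ℤ)+16*(j:ℤ))^(c-α) * 16^m * 2^j) := by ring
          _ ≤ (((2*c-1).doubleFactorial : ℤ) * (c.choose α)) *
                (2 * 16^α * (8*(m:ℤ)+16*(j:ℤ))^(c-α) * 16^m * 2^j) := by
              apply mul_le_mul_of_nonneg_right h3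
              positivity
          _ = 2 * ((2*c-1).doubleFactorial : ℤ) * (c.choose α) * 16^α *
                (8*(m:ℤ)+16*(j:ℤ))^(c-α) * 16^m * 2^j := by ring
      calc NZ m (j+1) (2*c)
          = ∑ α ∈ range (c+1), ((2*c).choose (2*α) : ℤ) * 2 * 16^α * NZ m j (2*(c-α)) :=
            NZ_succ_j m j c
        _ ≤ ∑ α ∈ range (c+1), 2 * ((2*c-1).doubleFactorial : ℤ) * (c.choose α) * 16^α *
              (8*(m:ℤ)+16*(j:ℤ))^(c-α) * 16^m * 2^j := Finset.sum_le_sum tb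
        _ = ((2*c-1).doubleFactorial : ℤ) * 16^m * 2^(j+1) *
              ∑ α ∈ range (c+1), (c.choose α : ℤ) * 16^α * (8*(m:ℤ)+16*(j:ℤ))^(c-α) := by
            rw [Finset.mul_sum]
            apply Finset.sum_congr rfl
            intro α _
            ring
        _ = ((2*c-1).doubleFactorial : ℤ) * (8*(m:ℤ)+16*((j:ℤ)+1))^c * 16^m * 2^(j+1) := by
            rw [← binomX (8*(m:ℤ)+16*(j:ℤ)) 16 c]
            ring_nf
        _ = ((2*c-1).doubleFactorial : ℤ) * (8*(m:ℤ)+16*((j+1:ℕ):ℤ))^c * 16^m * 2^(j+1) := by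
            push_cast
            ring

/-! ### The falling-factorial shift and the main integer bound -/

lemma key_choose_desc (m k j : ℕ) (hjk : j ≤ k) (hkm : k ≤ m) :
    m.choose k * k.descFactorial j = m.descFactorial j * (m-j).choose (k-j) := by
  rw [Nat.descFactorial_eq_factorial_mul_choose k j, Nat.descFactorial_eq_factorial_mul_choose m j]
  rw [show m.choose k * (j.factorial * k.choose j)
      = j.factorial * (m.choose k * k.choose j) by ring,
    Nat.choose_mul hjk]
  ring

lemma shiftW (m j : ℕ) (hj : j ≤ m) (A : ℕ → ℤ) :
    ∑ k ∈ range (m+1), ((m.choose k * k.descFactorial j : ℕ) : ℤ) * 8^(m-k) * 4^k * A k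
      = ((m.descFactorial j : ℕ) : ℤ) * 4^j *
          ∑ k ∈ range (m-j+1), ((m-j).choose k : ℤ) * 8^(m-j-k) * 4^k * A (k+j) := by
  have hzero : ∀ k ∈ Finset.range j,
      ((m.choose k * k.descFactorial j : ℕ) : ℤ) * 8^(m-k) * 4^k * A k = 0 := by
    intro k hk
    have : k.descFactorial j = 0 :=
      Nat.descFactorial_eq_zero_iff_lt.mpr (Finset.mem_range.mp hk)
    rw [this]
    push_cast
    ring
  have hsplit : ∑ k ∈ range (m+1), ((m.choose k * k.descFactorial j : ℕ) : ℤ) * 8^(m-k) * 4^k * A k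
      = ∑ k ∈ Finset.Ico j (m+1), ((m.choose k * k.descFactorial j : ℕ) : ℤ) * 8^(m-k) * 4^k * A k := by
    rw [Finset.range_eq_Ico, ← Finset.sum_Ico_consecutive _ (by omega : 0 ≤ j) (by omega : j ≤ m+1)]
    rw [← Finset.range_eq_Ico]
    rw [Finset.sum_congr rfl hzero, Finset.sum_const, smul_zero, zero_add]
  rw [hsplit, Finset.sum_Ico_eq_sum_range]
  have e : m+1-j = m-j+1 := by omega
  rw [e, Finset.mul_sum]
  apply Finset.sum_congr rfl
  intro k hk
  have hkmj : k ≤ m-j := by have := Finset.mem_range.mp hk; omega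
  have h1 : m.choose (j+k) * (j+k).descFactorial j = m.descFactorial j * (m-j).choose k := by
    rw [key_choose_desc m (j+k) j (by omega) (by omega)]
    congr 2
    omega
  have e2 : m-(j+k) = m-j-k := by omega
  have e3 : (4:ℤ)^(j+k) = 4^j * 4^k := by rw [pow_add]
  have e4 : j+k = k+j := by omega
  calc ((m.choose (j+k) * (j+k).descFactorial j : ℕ) : ℤ) * 8^(m-(j+k)) * 4^(j+k) * A (j+k)
      = ((m.descFactorial j * (m-j).choose k : ℕ) : ℤ) * 8^(m-(j+k)) * 4^(j+k) * A (j+k) := by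
        rw [h1]
    _ = ((m.descFactorial j : ℕ) : ℤ) * 4^j *
          (((m-j).choose k : ℤ) * 8^(m-j-k) * 4^k * A (k+j)) := by
        rw [e2, e3, e4]
        push_cast
        ring

def BB (m r s : ℕ) : ℤ :=
  ∑ k ∈ range (m+1), (m.choose k : ℤ) * 8^(m-k) * 2^k * AA r k * AA s k

theorem mainIntBound (m a c : ℕ) (ha : 1 ≤ a) :
    BB m (2*a) (2*c)
      ≤ ((2*a-1).doubleFactorial : ℤ) * ((2*c-1).doubleFactorial : ℤ) * 16^m * 8^(a+c) *
          m * ((m:ℤ)+a)^(c+(a-1)) := by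
  have Da := ((2*a-1).doubleFactorial : ℤ)
  -- Step 1 : Gaussian domination on the r-factor
  have S1 : BB m (2*a) (2*c)
      ≤ ((2*a-1).doubleFactorial : ℤ) * 16^a *
          ∑ k ∈ range (m+1), (m.choose k : ℤ) * 8^(m-k) * 4^k * (k:ℤ)^a * AA (2*c) k := by
    rw [BB, Finset.mul_sum]
    apply Finset.sum_le_sum
    intro k _
    have h1 := AA_le k a
    have hq : (0:ℤ) ≤ (m.choose k : ℤ) * 8^(m-k) * 2^k * AA (2*c) k := by
      have := AA_nonneg c k
      positivity
    calc (m.choose k : ℤ) * 8^(m-k) * 2^k * AA (2*a) k * AA (2*c) k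
        = AA (2*a) k * ((m.choose k : ℤ) * 8^(m-k) * 2^k * AA (2*c) k) := by ring
      _ ≤ (((2*a-1).doubleFactorial : ℤ) * 16^a * (k:ℤ)^a * 2^k) *
            ((m.choose k : ℤ) * 8^(m-k) * 2^k * AA (2*c) k) :=
          mul_le_mul_of_nonneg_right h1 hq
      _ = ((2*a-1).doubleFactorial : ℤ) * 16^a *
            ((m.choose k : ℤ) * 8^(m-k) * (2^k*2^k) * (k:ℤ)^a * AA (2*c) k) := by ring
      _ = ((2*a-1).doubleFactorial : ℤ) * 16^a *
            ((m.choose k : ℤ) * 8^(m-k) * 4^k * (k:ℤ)^a * AA (2*c) k) := by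
          rw [show (2:ℤ)^k*2^k = 4^k by rw [← mul_pow]; norm_num]
  -- Step 2 : expand k^a into falling factorials
  have S2 : ∑ k ∈ range (m+1), (m.choose k : ℤ) * 8^(m-k) * 4^k * (k:ℤ)^a * AA (2*c) k
      = ∑ j ∈ range (a+1), (St a j : ℤ) *
          ∑ k ∈ range (m+1), ((m.choose k * k.descFactorial j : ℕ) : ℤ) * 8^(m-k) * 4^k *
            AA (2*c) k := by
    have hk : ∀ k ∈ range (m+1), (m.choose k : ℤ) * 8^(m-k) * 4^k * (k:ℤ)^a * AA (2*c) k
        = ∑ j ∈ range (a+1), (St a j : ℤ) *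
            (((m.choose k * k.descFactorial j : ℕ) : ℤ) * 8^(m-k) * 4^k * AA (2*c) k) := by
      intro k _
      have hp : ((k:ℤ))^a = ∑ j ∈ range (a+1), ((St a j * k.descFactorial j : ℕ) : ℤ) := by
        have := pow_eq_sum_St a k
        calc ((k:ℤ))^a = ((k^a : ℕ) : ℤ) := by push_cast; ring
          _ = ∑ j ∈ range (a+1), ((St a j * k.descFactorial j : ℕ) : ℤ) := by
              rw [this]; push_cast; ring
      rw [show (m.choose k : ℤ) * 8^(m-k) * 4^k * (k:ℤ)^a * AA (2*c) k
          = (k:ℤ)^a * ((m.choose k : ℤ) * 8^(m-k) * 4^k * AA (2*c) k) by ring, hp,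
        Finset.sum_mul]
      apply Finset.sum_congr rfl
      intro j _
      push_cast
      ring
    rw [Finset.sum_congr rfl hk, Finset.sum_comm]
    apply Finset.sum_congr rfl
    intro j _
    rw [Finset.mul_sum]
  -- Step 3 : per-j bound
  have S3 : ∀ j ∈ range (a+1),
      (St a j : ℤ) *
          ∑ k ∈ range (m+1), ((m.choose k * k.descFactorial j : ℕ) : ℤ) * 8^(m-k) * 4^k *
            AA (2*c) k
        ≤ ((St a j * (m.descFactorial j * (m+j)^c) : ℕ) : ℤ) * 8^j * 16^(m-j) * 8^c *
            ((2*c-1).doubleFactorial : ℤ) := by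
    intro j hj
    rcases le_or_gt j m with hjm | hjm
    · have hW := shiftW m j hjm (fun k => AA (2*c) k)
      rw [hW]
      have hNZ : ∑ k ∈ range (m-j+1), ((m-j).choose k : ℤ) * 8^(m-j-k) * 4^k * AA (2*c) (k+j)
          = NZ (m-j) j (2*c) := rfl
      rw [hNZ]
      have hb := NZ_le j (m-j) c
      have harg : (8*((m-j : ℕ):ℤ)+16*(j:ℤ)) = 8*((m:ℤ)+(j:ℤ)) := by
        have : ((m-j : ℕ):ℤ) = (m:ℤ) - (j:ℤ) := by
          push_cast [hjm]
          ring
        rw [this]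
        ring
      rw [harg] at hb
      calc (St a j : ℤ) * (((m.descFactorial j : ℕ) : ℤ) * 4^j * NZ (m-j) j (2*c))
          ≤ (St a j : ℤ) * (((m.descFactorial j : ℕ) : ℤ) * 4^j *
              (((2*c-1).doubleFactorial : ℤ) * (8*((m:ℤ)+(j:ℤ)))^c * 16^(m-j) * 2^j)) := by
            apply mul_le_mul_of_nonneg_left _ (by positivity)
            apply mul_le_mul_of_nonneg_left hb (by positivity)
        _ = ((St a j * m.descFactorial j : ℕ) : ℤ) * (8*((m:ℤ)+(j:ℤ)))^c * (4^j * 2^j) *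
              16^(m-j) * ((2*c-1).doubleFactorial : ℤ) := by
            push_cast
            ring
        _ = ((St a j * (m.descFactorial j * (m+j)^c) : ℕ) : ℤ) * 8^j * 16^(m-j) * 8^c *
              ((2*c-1).doubleFactorial : ℤ) := by
            have e1 : (4:ℤ)^j * 2^j = 8^j := by rw [← mul_pow]; norm_num
            have e2 : (8*((m:ℤ)+(j:ℤ)))^c = 8^c * (((m+j : ℕ):ℤ))^c := by
              rw [mul_pow]
              push_cast
              ring
            rw [e1, e2]
            push_cast
            ring
    · -- j > m : left side is zero, right side is zero
      have hz : ∀ k ∈ range (m+1),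
          ((m.choose k * k.descFactorial j : ℕ) : ℤ) * 8^(m-k) * 4^k * AA (2*c) k = 0 := by
        intro k hk
        have : k.descFactorial j = 0 := by
          apply Nat.descFactorial_eq_zero_iff_lt.mpr
          have := Finset.mem_range.mp hk
          omega
        rw [this]
        push_cast
        ring
      rw [Finset.sum_congr rfl hz, Finset.sum_const, smul_zero, mul_zero]
      have : m.descFactorial j = 0 := Nat.descFactorial_eq_zero_iff_lt.mpr hjm
      rw [this]
      push_cast
      ring_nf
      positivity
  -- Step 4 : combine
  have S4 : BB m (2*a) (2*c)
      ≤ ((2*a-1).doubleFactorial : ℤ) * 16^a *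
          ∑ j ∈ range (a+1), ((St a j * (m.descFactorial j * (m+j)^c) : ℕ) : ℤ) * 8^j *
            16^(m-j) * 8^c * ((2*c-1).doubleFactorial : ℤ) := by
    apply S1.trans
    rw [S2]
    apply mul_le_mul_of_nonneg_left (Finset.sum_le_sum S3) (by positivity)
  have S6 : ∀ j ∈ range (a+1),
      ((St a j * (m.descFactorial j * (m+j)^c) : ℕ) : ℤ) * 8^j * 16^(m-j) * 8^c *
          ((2*c-1).doubleFactorial : ℤ) * 16^a
        ≤ ((St a j * 2^(a-j) * (m.descFactorial j * (m+j)^c) : ℕ) : ℤ) *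
            (16^m * 8^(a+c) * ((2*c-1).doubleFactorial : ℤ)) := by
    intro j hj
    have hja : j ≤ a := by have := Finset.mem_range.mp hj; omega
    rcases le_or_gt j m with hjm | hjm
    · apply le_of_eq
      have hpow : (8:ℕ)^j * 16^(m-j) * 16^a * 8^c = 2^(a-j) * (16^m * 8^(a+c)) := by
        have h8 : (8:ℕ) = 2^3 := by norm_num
        have h16 : (16:ℕ) = 2^4 := by norm_num
        simp only [h8, h16, ← pow_mul, ← pow_add]
        congr 1
        omega
      have hnat : (St a j * (m.descFactorial j * (m+j)^c)) * (8^j * 16^(m-j) * 16^a * 8^c)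
          = (St a j * 2^(a-j) * (m.descFactorial j * (m+j)^c)) * (16^m * 8^(a+c)) := by
        rw [hpow]
        ring
      have := congrArg (fun n : ℕ => (n : ℤ)) hnat
      push_cast at this
      calc ((St a j * (m.descFactorial j * (m+j)^c) : ℕ) : ℤ) * 8^j * 16^(m-j) * 8^c *
            ((2*c-1).doubleFactorial : ℤ) * 16^a
          = (((St a j : ℤ)) * (((m.descFactorial j : ℕ):ℤ) * (((m+j:ℕ):ℤ))^c)
              * ((8:ℤ)^j * 16^(m-j) * 16^a * 8^c)) * ((2*c-1).doubleFactorial : ℤ) := by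
            push_cast
            ring
        _ = (((St a j : ℤ)) * 2^(a-j) * (((m.descFactorial j : ℕ):ℤ) * (((m+j:ℕ):ℤ))^c)
              * ((16:ℤ)^m * 8^(a+c))) * ((2*c-1).doubleFactorial : ℤ) := by
            rw [show (((St a j : ℤ)) * (((m.descFactorial j : ℕ):ℤ) * (((m+j:ℕ):ℤ))^c)
              * ((8:ℤ)^j * 16^(m-j) * 16^a * 8^c))
              = (((St a j : ℤ)) * 2^(a-j) * (((m.descFactorial j : ℕ):ℤ) * (((m+j:ℕ):ℤ))^c)
              * ((16:ℤ)^m * 8^(a+c))) from by exact_mod_cast congrArg (fun n : ℕ => (n : ℤ)) hnat]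
        _ = ((St a j * 2^(a-j) * (m.descFactorial j * (m+j)^c) : ℕ) : ℤ) *
              (16^m * 8^(a+c) * ((2*c-1).doubleFactorial : ℤ)) := by
            push_cast
            ring
    · have hd : m.descFactorial j = 0 := Nat.descFactorial_eq_zero_iff_lt.mpr hjm
      rw [hd]
      push_cast
      ring_nf
      positivity
  have S7 : ∑ j ∈ range (a+1), ((St a j * 2^(a-j) * (m.descFactorial j * (m+j)^c) : ℕ) : ℤ)
      ≤ ((m * (m+a)^(c+(a-1)) : ℕ) : ℤ) := by
    rw [← Nat.cast_sum]
    exact_mod_cast Nat.cast_le.mpr (intClaim m a c ha)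
  calc BB m (2*a) (2*c)
      ≤ ((2*a-1).doubleFactorial : ℤ) * 16^a *
          ∑ j ∈ range (a+1), ((St a j * (m.descFactorial j * (m+j)^c) : ℕ) : ℤ) * 8^j *
            16^(m-j) * 8^c * ((2*c-1).doubleFactorial : ℤ) := S4
    _ = ((2*a-1).doubleFactorial : ℤ) *
          ∑ j ∈ range (a+1), ((St a j * (m.descFactorial j * (m+j)^c) : ℕ) : ℤ) * 8^j *
            16^(m-j) * 8^c * ((2*c-1).doubleFactorial : ℤ) * 16^a := by
        rw [Finset.mul_sum, Finset.mul_sum]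
        apply Finset.sum_congr rfl
        intro j _
        ring
    _ ≤ ((2*a-1).doubleFactorial : ℤ) *
          ∑ j ∈ range (a+1), ((St a j * 2^(a-j) * (m.descFactorial j * (m+j)^c) : ℕ) : ℤ) *
            (16^m * 8^(a+c) * ((2*c-1).doubleFactorial : ℤ)) := by
        apply mul_le_mul_of_nonneg_left (Finset.sum_le_sum S6) (by positivity)
    _ = ((2*a-1).doubleFactorial : ℤ) *
          ((∑ j ∈ range (a+1), ((St a j * 2^(a-j) * (m.descFactorial j * (m+j)^c) : ℕ) : ℤ)) *
            (16^m * 8^(a+c) * ((2*c-1).doubleFactorial : ℤ))) := by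
        rw [← Finset.sum_mul]
    _ ≤ ((2*a-1).doubleFactorial : ℤ) *
          (((m * (m+a)^(c+(a-1)) : ℕ) : ℤ) *
            (16^m * 8^(a+c) * ((2*c-1).doubleFactorial : ℤ))) := by
        apply mul_le_mul_of_nonneg_left _ (by positivity)
        apply mul_le_mul_of_nonneg_right S7 (by positivity)
    _ = ((2*a-1).doubleFactorial : ℤ) * ((2*c-1).doubleFactorial : ℤ) * 16^m * 8^(a+c) *
          m * ((m:ℤ)+a)^(c+(a-1)) := by
        push_cast
        ring

/-! ### The local coset model -/

abbrev K4 := ZMod 2 × ZMod 2 × ZMod 2 × ZMod 2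

def ch (x : ZMod 2) : ℤ := (-1)^x.val

def uu4 (w : K4) : ℤ := 2*ch (w.1 + w.2.1) + 2*ch (w.2.2.1 + w.2.2.2)
def vv4 (w : K4) : ℤ := 2*ch (w.1 + w.2.2.1) + 2*ch (w.2.1 + w.2.2.2)

lemma sum_Z2 {M : Type*} [AddCommMonoid M] (f : ZMod 2 → M) : ∑ x : ZMod 2, f x = f 0 + f 1 := by
  have : (Finset.univ : Finset (ZMod 2)) = {0, 1} := by decide
  rw [this, Finset.sum_insert (by decide), Finset.sum_singleton]

lemma z00 : (0+0 : ZMod 2) = 0 := rfl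
lemma z01 : (0+1 : ZMod 2) = 1 := rfl
lemma z10 : (1+0 : ZMod 2) = 1 := rfl
lemma z11 : (1+1 : ZMod 2) = 0 := by decide
lemma ch0 : ch 0 = 1 := rfl
lemma ch1 : ch 1 = -1 := by decide

lemma local16 (H : ℤ → ℤ → ℤ) :
    ∑ w : K4, H (uu4 w) (vv4 w)
      = 8 * H 0 0 + 2*(H 4 4 + H 4 (-4) + H (-4) 4 + H (-4) (-4)) := by
  simp only [Fintype.sum_prod_type, sum_Z2, uu4, vv4, z00, z01, z10, z11, ch0, ch1]
  norm_num
  ring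

/-! ### The binomial representation of the model sum -/

def PhiZ (mm p q : ℕ) : ℤ :=
  ∑ F : Fin mm → K4, (∑ i, uu4 (F i))^p * (∑ i, vv4 (F i))^q

theorem Crep (p q : ℕ) : ∀ (mm : ℕ) (x y : ℤ),
    (∑ F : Fin mm → K4, (x + ∑ i, uu4 (F i))^p * (y + ∑ i, vv4 (F i))^q)
      = ∑ k ∈ range (mm+1), (mm.choose k : ℤ) * 8^(mm-k) * 2^k * Gp p k x * Gp q k y
  | 0 => by
      intro x y
      have h1 : ∀ F : Fin 0 → K4, (x + ∑ i, uu4 (F i))^p * (y + ∑ i, vv4 (F i))^q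
          = x^p * y^q := by
        intro F
        simp
      rw [Finset.sum_congr rfl (fun F _ => h1 F), Finset.sum_const, Finset.card_univ]
      have hc : Fintype.card (Fin 0 → K4) = 1 := by simp
      rw [hc, one_smul]
      rw [Finset.sum_range_succ, Finset.range_zero, Finset.sum_empty, Gp_zero, Gp_zero]
      norm_num
  | (mm+1) => by
      intro x y
      have IH := Crep p q mm
      -- strip the first coordinate
      have strip : (∑ F : Fin (mm+1) → K4, (x + ∑ i, uu4 (F i))^p * (y + ∑ i, vv4 (F i))^q)
          = ∑ w : K4, ∑ F : Fin mm → K4,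
              ((x + uu4 w) + ∑ i, uu4 (F i))^p * ((y + vv4 w) + ∑ i, vv4 (F i))^q := by
        have key : ∑ bc : K4 × (Fin mm → K4),
            ((x + uu4 bc.1) + ∑ i, uu4 (bc.2 i))^p * ((y + vv4 bc.1) + ∑ i, vv4 (bc.2 i))^q
            = ∑ F : Fin (mm+1) → K4, (x + ∑ i, uu4 (F i))^p * (y + ∑ i, vv4 (F i))^q := by
          apply Fintype.sum_equiv (Fin.consEquiv (fun _ => K4))
          intro bc
          simp [Fin.sum_univ_succ]
          ring_nf
        rw [← key, Fintype.sum_prod_type]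
      rw [strip]
      have loc := local16 (fun z w => ∑ F : Fin mm → K4,
          ((x + z) + ∑ i, uu4 (F i))^p * ((y + w) + ∑ i, vv4 (F i))^q)
      rw [loc]
      simp only [add_zero, ← sub_eq_add_neg]
      rw [IH x y, IH (x+4) (y+4), IH (x+4) (y-4), IH (x-4) (y+4), IH (x-4) (y-4)]
      have ps := pascal_split mm 2 (fun k => Gp p k x * Gp q k y)
      have hA : ∑ k ∈ range (mm+1+1), ((mm+1).choose k : ℤ)*8^(mm+1-k)*2^k*Gp p k x*Gp q k y
          = ∑ k ∈ range (mm+2), ((mm+1).choose k : ℤ)*8^(mm+1-k)*2^k*(Gp p k x*Gp q k y) := by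
        apply Finset.sum_congr rfl; intro k _; ring
      rw [hA, ps]
      have h8 : ∑ k ∈ range (mm+1), (mm.choose k : ℤ)*8^(mm-k)*2^k*(Gp p k x*Gp q k y)
          = ∑ k ∈ range (mm+1), (mm.choose k : ℤ)*8^(mm-k)*2^k*Gp p k x*Gp q k y := by
        apply Finset.sum_congr rfl; intro k _; ring
      have hB : ∑ k ∈ range (mm+1), (mm.choose k : ℤ)*8^(mm-k)*2^k*(Gp p (k+1) x*Gp q (k+1) y)
          = (∑ k ∈ range (mm+1), (mm.choose k : ℤ)*8^(mm-k)*2^k*Gp p k (x+4)*Gp q k (y+4))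
            + (∑ k ∈ range (mm+1), (mm.choose k : ℤ)*8^(mm-k)*2^k*Gp p k (x+4)*Gp q k (y-4))
            + (∑ k ∈ range (mm+1), (mm.choose k : ℤ)*8^(mm-k)*2^k*Gp p k (x-4)*Gp q k (y+4))
            + (∑ k ∈ range (mm+1), (mm.choose k : ℤ)*8^(mm-k)*2^k*Gp p k (x-4)*Gp q k (y-4)) := by
        rw [← Finset.sum_add_distrib, ← Finset.sum_add_distrib, ← Finset.sum_add_distrib]
        apply Finset.sum_congr rfl
        intro k _
        rw [Gp_succ, Gp_succ]
        ring
      rw [h8, hB]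

lemma PhiZ_eq_BB (m p q : ℕ) : PhiZ m p q = BB m p q := by
  have h := Crep p q m 0 0
  have h1 : ∀ F : Fin m → K4,
      ((0:ℤ) + ∑ i, uu4 (F i))^p * ((0:ℤ) + ∑ i, vv4 (F i))^q
        = (∑ i, uu4 (F i))^p * (∑ i, vv4 (F i))^q := by
    intro F
    rw [zero_add, zero_add]
  rw [PhiZ, ← Finset.sum_congr rfl (fun F _ => h1 F), h, BB]
  apply Finset.sum_congr rfl
  intro k _
  rfl

/-! ### Reduction of `S` to the model -/

def acG {G : Type*} [AddCommGroup G] [Fintype G] (f : G → ZMod 2) (u : G) : ℤ :=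
  ∑ x : G, (-1 : ℤ)^((f x + f (x + u)).val)

lemma acG_comp {G₁ G₂ : Type*} [AddCommGroup G₁] [AddCommGroup G₂] [Fintype G₁] [Fintype G₂]
    (e : G₁ ≃+ G₂) (f : G₂ → ZMod 2) (u : G₁) :
    acG f (e u) = acG (f ∘ e) u := by
  rw [acG, acG]
  symm
  apply Fintype.sum_equiv e.toEquiv
    (fun x => (-1 : ℤ)^(((f ∘ e) x + (f ∘ e) (x + u)).val))
    (fun y => (-1 : ℤ)^((f y + f (y + e u)).val))
  intro x
  have : e (x + u) = e x + e u := map_add e x u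
  simp [Function.comp, this]

abbrev P2 := ZMod 2 × ZMod 2

lemma P2cases : ∀ pz : P2, pz = (0,0) ∨ pz = (1,0) ∨ pz = (0,1) ∨ pz = (1,1) := by decide

/-- The evaluation equivalence between `P2 → ZMod 2` and `K4`,
    in its curried form over a product with `W`. -/
def eFS (W : Type*) : ((P2 × W) → ZMod 2) ≃ (W → K4) where
  toFun g := fun w => (g ((0,0),w), g ((1,0),w), g ((0,1),w), g ((1,1),w))
  invFun F := fun xw =>
    if xw.1 = ((0,0) : P2) then (F xw.2).1
    else if xw.1 = ((1,0) : P2) then (F xw.2).2.1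
    else if xw.1 = ((0,1) : P2) then (F xw.2).2.2.1
    else (F xw.2).2.2.2
  left_inv g := by
    funext xw
    rcases xw with ⟨pz, w⟩
    rcases P2cases pz with h | h | h | h <;> subst h <;> simp <;>
      rw [if_neg (by decide), if_neg (by decide)]
  right_inv F := by
    funext w
    simp

lemma acH_u (W : Type*) [AddCommGroup W] [Fintype W] (g : (P2 × W) → ZMod 2) :
    acG g (((1,0) : P2), (0 : W)) = ∑ w : W, uu4 (eFS W g w) := by
  rw [acG, Fintype.sum_prod_type, Finset.sum_comm]
  apply Finset.sum_congr rfl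
  intro w _
  have hadd : ∀ pz : P2, ((pz, w) + (((1,0) : P2), (0 : W))) = (pz + (1,0), w) := by
    intro pz
    simp [Prod.ext_iff]
  rw [Finset.sum_congr rfl (fun pz _ => by rw [hadd pz])]
  rw [Fintype.sum_prod_type, sum_Z2]
  conv_lhs => rw [sum_Z2, sum_Z2]
  have e1 : ((0,0) : P2) + (1,0) = (1,0) := by decide
  have e2 : ((1,0) : P2) + (1,0) = (0,0) := by decide
  have e3 : ((0,1) : P2) + (1,0) = (1,1) := by decide
  have e4 : ((1,1) : P2) + (1,0) = (0,1) := by decide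
  rw [e1, e2, e3, e4]
  show (-1:ℤ)^((g ((0,0),w) + g ((1,0),w)).val) + (-1:ℤ)^((g ((0,1),w) + g ((1,1),w)).val)
      + ((-1:ℤ)^((g ((1,0),w) + g ((0,0),w)).val) + (-1:ℤ)^((g ((1,1),w) + g ((0,1),w)).val))
    = uu4 (eFS W g w)
  rw [add_comm (g ((1,0),w)) (g ((0,0),w)), add_comm (g ((1,1),w)) (g ((0,1),w))]
  show _ = 2 * ch (g ((0,0),w) + g ((1,0),w)) + 2 * ch (g ((0,1),w) + g ((1,1),w))
  rw [ch, ch]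
  ring

lemma acH_v (W : Type*) [AddCommGroup W] [Fintype W] (g : (P2 × W) → ZMod 2) :
    acG g (((0,1) : P2), (0 : W)) = ∑ w : W, vv4 (eFS W g w) := by
  rw [acG, Fintype.sum_prod_type, Finset.sum_comm]
  apply Finset.sum_congr rfl
  intro w _
  have hadd : ∀ pz : P2, ((pz, w) + (((0,1) : P2), (0 : W))) = (pz + (0,1), w) := by
    intro pz
    simp [Prod.ext_iff]
  rw [Finset.sum_congr rfl (fun pz _ => by rw [hadd pz])]
  rw [Fintype.sum_prod_type, sum_Z2]
  conv_lhs => rw [sum_Z2, sum_Z2]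
  have e1 : ((0,0) : P2) + (0,1) = (0,1) := by decide
  have e2 : ((1,0) : P2) + (0,1) = (1,1) := by decide
  have e3 : ((0,1) : P2) + (0,1) = (0,0) := by decide
  have e4 : ((1,1) : P2) + (0,1) = (1,0) := by decide
  rw [e1, e2, e3, e4]
  show (-1:ℤ)^((g ((0,0),w) + g ((0,1),w)).val) + (-1:ℤ)^((g ((0,1),w) + g ((0,0),w)).val)
      + ((-1:ℤ)^((g ((1,0),w) + g ((1,1),w)).val) + (-1:ℤ)^((g ((1,1),w) + g ((1,0),w)).val))
    = vv4 (eFS W g w)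
  rw [add_comm (g ((0,1),w)) (g ((0,0),w)), add_comm (g ((1,1),w)) (g ((1,0),w))]
  show _ = 2 * ch (g ((0,0),w) + g ((0,1),w)) + 2 * ch (g ((1,0),w) + g ((1,1),w))
  rw [ch, ch]
  ring

lemma S_reduce (n : ℕ) (hn : 2 ≤ n) (a b : Fin n → ZMod 2) (ha : a ≠ 0) (hb : b ≠ 0)
    (hab : a ≠ b) (r s : ℕ) :
    (∑ f : (Fin n → ZMod 2) → ZMod 2, (ac f a)^r * (ac f b)^s) = PhiZ (2^(n-2)) r s := by
  classical
  have hli : LinearIndependent (ZMod 2) ![a, b] := by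
    rw [linearIndependent_fin2]
    refine ⟨by simpa using hb, ?_⟩
    intro t
    rcases (by decide : ∀ z : ZMod 2, z = 0 ∨ z = 1) t with h | h <;> subst h
    · simpa using (Ne.symm ha)
    · simpa using (Ne.symm hab)
  set p := Submodule.span (ZMod 2) {a, b} with hp
  obtain ⟨q, hq⟩ := Submodule.exists_isCompl p
  haveI : Fintype q := Fintype.ofFinite q
  have hmem : ∀ cd : ZMod 2 × ZMod 2, cd.1 • a + cd.2 • b ∈ p := by
    intro cd; exact Submodule.mem_span_pair.mpr ⟨cd.1, cd.2, rfl⟩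
  let L : (ZMod 2 × ZMod 2) →ₗ[ZMod 2] p :=
    { toFun := fun cd => ⟨cd.1 • a + cd.2 • b, hmem cd⟩
      map_add' := by
        intro u v
        apply Subtype.ext
        show (u.1+v.1) • a + (u.2+v.2) • b = (u.1 • a + u.2 • b) + (v.1 • a + v.2 • b)
        rw [add_smul, add_smul]; abel
      map_smul' := by
        intro t v
        apply Subtype.ext
        show (t*v.1) • a + (t*v.2) • b = t • (v.1 • a + v.2 • b)
        rw [mul_smul, mul_smul, smul_add] }
  have hLapp : ∀ cd : ZMod 2 × ZMod 2, (L cd : Fin n → ZMod 2) = cd.1 • a + cd.2 • b := by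
    intro cd; rfl
  have hLinj : Function.Injective L := by
    intro u v huv
    have h0 : L (u - v) = 0 := by rw [map_sub, huv, sub_self]
    have h1 : (u.1-v.1) • a + (u.2-v.2) • b = 0 := by
      rw [sub_smul, sub_smul,
        show u.1•a - v.1•a + (u.2•b - v.2•b) = u.1•a + u.2•b - (v.1•a + v.2•b) by abel]
      simpa [hLapp] using congrArg Subtype.val h0
    have h2 := Fintype.linearIndependent_iff.mp hli ![u.1-v.1, u.2-v.2] (by
      rw [Fin.sum_univ_two]
      simpa using h1)
    have e0 := h2 0
    have e1 := h2 1
    simp at e0 e1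
    apply Prod.ext
    · exact sub_eq_zero.mp e0
    · exact sub_eq_zero.mp e1
  have hLsurj : Function.Surjective L := by
    rintro ⟨x, hx⟩
    obtain ⟨c, d, hcd⟩ := Submodule.mem_span_pair.mp hx
    exact ⟨(c,d), Subtype.ext hcd⟩
  let e1 : (ZMod 2 × ZMod 2) ≃ₗ[ZMod 2] p := LinearEquiv.ofBijective L ⟨hLinj, hLsurj⟩
  let E : ((ZMod 2 × ZMod 2) × q) ≃ₗ[ZMod 2] (Fin n → ZMod 2) :=
    (e1.prodCongr (LinearEquiv.refl (ZMod 2) q)).trans (Submodule.prodEquivOfIsCompl p q hq)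
  have hEapp : ∀ cd : ZMod 2 × ZMod 2, ∀ w : q, E (cd, w) = cd.1 • a + cd.2 • b + w := by
    intro cd w
    show Submodule.prodEquivOfIsCompl p q hq ((e1.prodCongr (LinearEquiv.refl (ZMod 2) q)) (cd, w))
      = cd.1 • a + cd.2 • b + w
    rw [LinearEquiv.prodCongr_apply, Submodule.coe_prodEquivOfIsCompl']
    show (e1 cd : Fin n → ZMod 2) + w = _
    have : (e1 cd : Fin n → ZMod 2) = cd.1 • a + cd.2 • b := hLapp cd
    rw [this]
  have hEa : E ((((1:ZMod 2),(0:ZMod 2)) : ZMod 2 × ZMod 2), (0:q)) = a := by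
    rw [hEapp]
    simp
  have hEb : E ((((0:ZMod 2),(1:ZMod 2)) : ZMod 2 × ZMod 2), (0:q)) = b := by
    rw [hEapp]
    simp
  have hcard : Fintype.card q = 2^(n-2) := by
    have h1 : Fintype.card ((ZMod 2 × ZMod 2) × q) = Fintype.card (Fin n → ZMod 2) :=
      Fintype.card_congr E.toEquiv
    rw [Fintype.card_prod] at h1
    have h2 : Fintype.card (ZMod 2 × ZMod 2) = 4 := by
      rw [Fintype.card_prod, ZMod.card]
    have h3 : Fintype.card (Fin n → ZMod 2) = 2^n := by
      rw [Fintype.card_fun, ZMod.card, Fintype.card_fin]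
      
    rw [h2, h3] at h1
    have h4 : (2:ℕ)^n = 4 * 2^(n-2) := by
      rw [show n = 2 + (n-2) by omega, pow_add]
      norm_num
    omega
  let eAdd : ((ZMod 2 × ZMod 2) × q) ≃+ (Fin n → ZMod 2) := E.toAddEquiv
  have step1 : ∑ g : ((ZMod 2 × ZMod 2) × q) → ZMod 2,
        (acG g (((1,0) : ZMod 2 × ZMod 2), (0:q)))^r * (acG g (((0,1) : ZMod 2 × ZMod 2), (0:q)))^s
      = ∑ f : (Fin n → ZMod 2) → ZMod 2, (ac f a)^r * (ac f b)^s := by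
    apply Fintype.sum_bijective (fun g => g ∘ eAdd.symm)
      (Equiv.arrowCongr eAdd.toEquiv (Equiv.refl (ZMod 2))).bijective
    intro g
    have hcomp : (g ∘ eAdd.symm) ∘ eAdd = g := by
      funext x
      simp [Function.comp]
    have hu : ac (g ∘ eAdd.symm) a = acG g (((1,0) : ZMod 2 × ZMod 2), (0:q)) := by
      show acG (g ∘ eAdd.symm) a = _
      rw [← hEa]
      rw [show E ((((1:ZMod 2),(0:ZMod 2)) : ZMod 2 × ZMod 2), (0:q))
          = eAdd ((((1:ZMod 2),(0:ZMod 2)) : ZMod 2 × ZMod 2), (0:q)) from rfl]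
      rw [acG_comp eAdd (g ∘ eAdd.symm), hcomp]
    have hv : ac (g ∘ eAdd.symm) b = acG g (((0,1) : ZMod 2 × ZMod 2), (0:q)) := by
      show acG (g ∘ eAdd.symm) b = _
      rw [← hEb]
      rw [show E ((((0:ZMod 2),(1:ZMod 2)) : ZMod 2 × ZMod 2), (0:q))
          = eAdd ((((0:ZMod 2),(1:ZMod 2)) : ZMod 2 × ZMod 2), (0:q)) from rfl]
      rw [acG_comp eAdd (g ∘ eAdd.symm), hcomp]
    rw [hu, hv]
  have step2 : ∑ g : ((ZMod 2 × ZMod 2) × q) → ZMod 2,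
        (acG g (((1,0) : ZMod 2 × ZMod 2), (0:q)))^r * (acG g (((0,1) : ZMod 2 × ZMod 2), (0:q)))^s
      = ∑ F : q → K4, (∑ w : q, uu4 (F w))^r * (∑ w : q, vv4 (F w))^s := by
    apply Fintype.sum_bijective (eFS q) (eFS q).bijective
    intro g
    rw [acH_u, acH_v]
  have step3 : ∑ F : q → K4, (∑ w : q, uu4 (F w))^r * (∑ w : q, vv4 (F w))^s
      = PhiZ (2^(n-2)) r s := by
    let eW : q ≃ Fin (2^(n-2)) := Fintype.equivFinOfCardEq hcard
    rw [PhiZ]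
    apply Fintype.sum_bijective (Equiv.arrowCongr eW (Equiv.refl K4))
      (Equiv.bijective _)
    intro F
    have h1 : ∑ w : q, uu4 (F w)
        = ∑ i : Fin (2^(n-2)), uu4 ((Equiv.arrowCongr eW (Equiv.refl K4)) F i) := by
      apply Fintype.sum_equiv eW
      intro w
      simp [Equiv.arrowCongr]
    have h2 : ∑ w : q, vv4 (F w)
        = ∑ i : Fin (2^(n-2)), vv4 ((Equiv.arrowCongr eW (Equiv.refl K4)) F i) := by
      apply Fintype.sum_equiv eW
      intro w
      simp [Equiv.arrowCongr]
    rw [h1, h2]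
  rw [← step1, step2, step3]

/-! ### Final assembly -/

theorem stmt9 (n : ℕ) (a b : Fin n → ZMod 2) (ha : a ≠ 0) (hb : b ≠ 0) (hab : a ≠ b)
    (r s : ℕ) (hr : Even r) (hs : Even s) (h2r : 2 ≤ r) (hrs : r ≤ s) :
    S n a b r s / (M n r * M n s)
      ≤ (1 + 2 * r * s / (2 ^ n * (((r + s) / 2 : ℕ) - 1 : ℝ))) ^ ((r + s) / 2 - 1) := by
  rcases Nat.lt_or_ge n 2 with hn | hn
  · exfalso
    interval_cases n
    · exact ha (funext fun x => x.elim0)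
    · apply hab
      have key : ∀ v : Fin 1 → ZMod 2, v ≠ 0 → v = fun _ => 1 := by
        intro v hv
        funext y
        rcases (by decide : ∀ z : ZMod 2, z = 0 ∨ z = 1) (v y) with h | h
        · exfalso
          apply hv
          funext y'
          rw [Subsingleton.elim y' y, h]
          rfl
        · exact h
      rw [key a ha, key b hb]
  obtain ⟨A, hA⟩ := hr
  obtain ⟨C, hC⟩ := hs
  have hA' : r = 2*A := by omega
  subst hA'
  have hC'' : s = 2*C := by omega
  subst hC''
  have hA1 : 1 ≤ A := by omega
  have hAC : A ≤ C := by omega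
  set m := 2^(n-2) with hm
  have hm1 : 1 ≤ m := Nat.one_le_two_pow
  have h4m : 4 * m = 2^n := by
    rw [hm, show n = 2+(n-2) by omega, pow_add]
    norm_num
  set T := A + C - 1 with hT
  have hexp : (2*A + 2*C)/2 - 1 = T := by omega
  have hAC1 : A + C = T + 1 := by omega
  have hT1 : 1 ≤ T := by omega
  have hScard : (Fintype.card ((Fin n → ZMod 2) → ZMod 2) : ℝ) = (16:ℝ)^m := by
    rw [Fintype.card_fun, Fintype.card_fun, ZMod.card, Fintype.card_fin]
    have h1 : (2:ℕ)^(2^n) = 16^m := by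
      rw [show (16:ℕ) = 2^4 by norm_num, ← pow_mul]
      congr 1
      omega
    exact_mod_cast congrArg (Nat.cast (R := ℝ)) h1
  have hS : S n a b (2*A) (2*C) = ((PhiZ m (2*A) (2*C) : ℤ) : ℝ) / (16:ℝ)^m := by
    rw [S, ev, hScard]
    congr 1
    have hterm : ∀ f ∈ (Finset.univ : Finset ((Fin n → ZMod 2) → ZMod 2)),
        ((ac f a : ℝ))^(2*A) * ((ac f b : ℝ))^(2*C)
          = (((ac f a)^(2*A) * (ac f b)^(2*C) : ℤ) : ℝ) := by
      intro f _
      push_cast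
      ring
    rw [Finset.sum_congr rfl hterm, ← Int.cast_sum,
      S_reduce n hn a b ha hb hab (2*A) (2*C)]
  have h2nR : (2:ℝ)^n = 4*(m:ℝ) := by
    exact_mod_cast congrArg (Nat.cast (R := ℝ)) h4m.symm
  have hMval : ∀ B : ℕ, M n (2*B) = (8*(m:ℝ))^B * ((2*B-1).doubleFactorial : ℝ) := by
    intro B
    rw [M]
    have hdiv : 2*B/2 = B := by omega
    rw [hdiv]
    have hfact : ((2*B).factorial : ℝ)
        = 2^B * (B.factorial : ℝ) * ((2*B-1).doubleFactorial : ℝ) := by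
      exact_mod_cast congrArg (Nat.cast (R := ℝ)) (factorial_two_mul' B)
    have hB0 : (B.factorial : ℝ) ≠ 0 := by
      exact_mod_cast B.factorial_ne_zero
    rw [div_eq_iff hB0, hfact, h2nR]
    rw [show ((8:ℝ)*(m:ℝ))^B = 8^B*(m:ℝ)^B from mul_pow _ _ _,
      show ((4:ℝ)*(m:ℝ))^B = 4^B*(m:ℝ)^B from mul_pow _ _ _,
      show ((8:ℝ))^B = 4^B * 2^B from by rw [show (8:ℝ) = 4*2 by norm_num, mul_pow]]
    ring
  have hMr := hMval A
  have hMs := hMval C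
  have hmR : (0:ℝ) < (m:ℝ) := by exact_mod_cast hm1
  have hDA : (0:ℝ) < ((2*A-1).doubleFactorial : ℝ) := by exact_mod_cast dfac_pos _
  have hDC : (0:ℝ) < ((2*C-1).doubleFactorial : ℝ) := by exact_mod_cast dfac_pos _
  have hMMpos : (0:ℝ) < M n (2*A) * M n (2*C) := by
    rw [hMr, hMs]
    positivity
  have hTR : (0:ℝ) < (T:ℝ) := by exact_mod_cast hT1
  have hrhsbase : (1 + 2 * ((2*A : ℕ):ℝ) * ((2*C : ℕ):ℝ) /
        ((2:ℝ)^n * ((((2*A+2*C)/2 : ℕ) : ℝ) - 1)))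
      = 1 + 8*(A:ℝ)*C/(4*(m:ℝ)*T) := by
    have h1 : ((((2*A+2*C)/2 : ℕ) : ℝ) - 1) = (T:ℝ) := by
      have h2 : ((2*A+2*C)/2 : ℕ) = T+1 := by omega
      rw [h2]
      push_cast
      ring
    rw [h1, h2nR]
    push_cast
    ring
  rw [hexp, hrhsbase]
  set base : ℝ := 1 + 8*(A:ℝ)*C/(4*(m:ℝ)*T) with hbase_def
  have hbasepos : (0:ℝ) < base := by
    rw [hbase_def]
    have : (0:ℝ) ≤ 8*(A:ℝ)*C/(4*(m:ℝ)*T) := by positivity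
    linarith
  have hkey : ((m:ℝ)+A) ≤ base * m := by
    rw [hbase_def]
    have hnat : A*(4*m*T) ≤ 8*A*C*m := by
      have h1 : A*T ≤ A*(2*C) := Nat.mul_le_mul_left A (by omega)
      calc A*(4*m*T) = 4*m*(A*T) := by ring
        _ ≤ 4*m*(A*(2*C)) := Nat.mul_le_mul_left _ h1
        _ = 8*A*C*m := by ring
    have hnatR : (A:ℝ)*(4*(m:ℝ)*T) ≤ 8*(A:ℝ)*C*m := by
      exact_mod_cast hnat
    have hA_le : (A:ℝ) ≤ 8*(A:ℝ)*C/(4*(m:ℝ)*T)*m := by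
      rw [div_mul_eq_mul_div, le_div_iff₀ (by positivity)]
      calc (A:ℝ)*(4*(m:ℝ)*T) ≤ 8*(A:ℝ)*C*m := hnatR
        _ = 8*(A:ℝ)*C*m := by ring
    calc ((m:ℝ)+A) ≤ m + 8*(A:ℝ)*C/(4*(m:ℝ)*T)*m := by linarith
      _ = (1 + 8*(A:ℝ)*C/(4*(m:ℝ)*T)) * m := by ring
  -- the main inequality
  have hPhiR : ((PhiZ m (2*A) (2*C) : ℤ):ℝ)
      ≤ ((2*A-1).doubleFactorial : ℝ) * ((2*C-1).doubleFactorial : ℝ) * 16^m * 8^(A+C) *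
          m * ((m:ℝ)+A)^(C+(A-1)) := by
    have h := mainIntBound m A C hA1
    rw [← PhiZ_eq_BB] at h
    exact_mod_cast h
  have hCe : C+(A-1) = T := by omega
  rw [hCe] at hPhiR
  rw [hS, div_div, div_le_iff₀ (by positivity)]
  apply hPhiR.trans
  have hstep : ((m:ℝ)+A)^T ≤ base^T * (m:ℝ)^T := by
    calc ((m:ℝ)+A)^T ≤ (base*m)^T := pow_le_pow_left₀ (by positivity) hkey T
      _ = base^T * (m:ℝ)^T := mul_pow _ _ _
  calc ((2*A-1).doubleFactorial : ℝ) * ((2*C-1).doubleFactorial : ℝ) * 16^m * 8^(A+C) *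
          m * ((m:ℝ)+A)^T
      ≤ ((2*A-1).doubleFactorial : ℝ) * ((2*C-1).doubleFactorial : ℝ) * 16^m * 8^(A+C) *
          m * (base^T * (m:ℝ)^T) := by
        apply mul_le_mul_of_nonneg_left hstep (by positivity)
    _ = base^T * (16^m * (M n (2*A) * M n (2*C))) := by
        rw [hMr, hMs]
        have hmm : (m:ℝ)*(m:ℝ)^T = (m:ℝ)^(A+C) := by
          rw [hAC1, pow_succ]
          ring
        calc ((2*A-1).doubleFactorial : ℝ) * ((2*C-1).doubleFactorial : ℝ) * 16^m * 8^(A+C) *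
              m * (base^T * (m:ℝ)^T)
            = base^T * (8^(A+C) * ((m:ℝ)*(m:ℝ)^T) *
                (((2*A-1).doubleFactorial : ℝ) * ((2*C-1).doubleFactorial : ℝ)) * 16^m) := by
              ring
          _ = base^T * (16^m * ((8*(m:ℝ))^A * ((2*A-1).doubleFactorial : ℝ) *
                ((8*(m:ℝ))^C * ((2*C-1).doubleFactorial : ℝ)))) := by
              rw [hmm]
              rw [show ((8:ℝ)*(m:ℝ))^A = 8^A*(m:ℝ)^A from mul_pow _ _ _,
                show ((8:ℝ)*(m:ℝ))^C = 8^C*(m:ℝ)^C from mul_pow _ _ _,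
                show ((8:ℝ))^(A+C) = 8^A*8^C from pow_add _ _ _,
                show ((m:ℝ))^(A+C) = (m:ℝ)^A*(m:ℝ)^C from pow_add _ _ _]
              ring
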